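/- arXiv:math/0410373 — 2 statements merged into one kernel-verified Lean document; each statement's English description precedes it below -/
import Mathlib

section
/- A connected hypergraph on n vertices with edge magnitude exactly n - 1 is a hypertree (has no cycles). -/
/-- A hypergraph on vertex set `V`: a family of edges (allowing repeated edges,
indexed by a finite type `E`), each edge being a subset of `V` with at least two vertices. -/
structure HGraph (V : Type) [Fintype V] [DecidableEq V] where
  E : Type
  fintypeE : Fintype E
  edge : E → Finset V
  two_le : ∀ e, 2 ≤ (edge e).card

attribute [instance] HGraph.fintypeE

namespace HGraph

variable {V : Type} [Fintype V] [DecidableEq V]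

/-- A walk `v₀, e₁, v₁, …, eₘ, vₘ` in a hypergraph: consecutive vertices both lie
in the intervening edge. -/
structure Walk (H : HGraph V) (m : ℕ) where
  vert : Fin (m + 1) → V
  edg : Fin m → H.E
  mem_left : ∀ i : Fin m, vert i.castSucc ∈ H.edge (edg i)
  mem_right : ∀ i : Fin m, vert i.succ ∈ H.edge (edg i)

/-- A path: a walk with all vertices distinct and all edges distinct. -/
def Walk.IsPath {H : HGraph V} {m : ℕ} (w : H.Walk m) : Prop :=
  Function.Injective w.vert ∧ Function.Injective w.edg

/-- A cycle: a walk with at least two edges, all edges distinct, and all vertices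
distinct except that the first and last coincide. -/
def Walk.IsCycle {H : HGraph V} {m : ℕ} (w : H.Walk m) : Prop :=
  2 ≤ m ∧ Function.Injective w.edg ∧ w.vert 0 = w.vert (Fin.last m) ∧
    ∀ i j : Fin (m + 1), w.vert i = w.vert j →
      i = j ∨ (i = 0 ∧ j = Fin.last m) ∨ (i = Fin.last m ∧ j = 0)

/-- A hypergraph is connected if every pair of vertices is joined by a path. -/
def Connected (H : HGraph V) : Prop :=
  ∀ u v : V, ∃ (m : ℕ) (w : H.Walk m),
    w.IsPath ∧ w.vert 0 = u ∧ w.vert (Fin.last m) = v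

/-- A hypertree is a connected hypergraph with no cycles. -/
def IsHypertree (H : HGraph V) : Prop :=
  H.Connected ∧ ∀ (m : ℕ) (w : H.Walk m), ¬ w.IsCycle

/-- The edge magnitude: the sum over all edges `e` of `|e| - 1`. -/
noncomputable def magnitude (H : HGraph V) : ℕ :=
  ∑ e : H.E, ((H.edge e).card - 1)

end HGraph

/-!
The incidence graph of `H`, on `V ⊕ E` with `v ~ e` iff `v ∈ e`, is connected and has
`|V| + |E|` vertices and `∑ |e| = magnitude + |E| = |V| - 1 + |E|` edges, so it is a tree.
A cycle `v₀, e₀, v₁, …, vₘ = v₀` of `H` would make the incidence `v₁ ∈ e₀` a non-bridge of it: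
the rest of the cycle leads from `v₁` back to `v₀ ∈ e₀` without using that incidence.
-/

open SimpleGraph

lemma SimpleGraph.reachable_of_forall_reachable_succ {W : Type} {G : SimpleGraph W} {m : ℕ}
    (a : Fin (m + 1) → W) (h : ∀ i : Fin m, G.Reachable (a i.castSucc) (a i.succ)) :
    G.Reachable (a 0) (a (Fin.last m)) := by
  induction (Fin.last m) using Fin.induction with
  | zero => rfl
  | succ i ih => exact ih.trans (h i)

namespace HGraph

variable {V : Type} [Fintype V] [DecidableEq V] {H : HGraph V}

def incidenceGraph (H : HGraph V) : SimpleGraph (V ⊕ H.E) :=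
  fromEdgeSet (Set.range fun p : Σ e, H.edge e => s(.inl p.2.1, .inr p.1))

@[simp]
lemma incidenceGraph_adj_inl_inr {v : V} {e : H.E} :
    H.incidenceGraph.Adj (.inl v) (.inr e) ↔ v ∈ H.edge e := by
  simp [incidenceGraph]

lemma card_edgeSet_incidenceGraph (H : HGraph V) :
    Nat.card H.incidenceGraph.edgeSet = ∑ e, (H.edge e).card := by
  have hinj : Function.Injective
      fun p : Σ e, H.edge e => (s(.inl p.2.1, .inr p.1) : Sym2 (V ⊕ H.E)) := by
    rintro ⟨e, v, hv⟩ ⟨f, u, hu⟩ h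
    simp only [Sym2.eq_iff, Sum.inl.injEq, Sum.inr.injEq, reduceCtorEq, false_and, or_false] at h
    obtain ⟨rfl, rfl⟩ := h
    rfl
  rw [incidenceGraph, edgeSet_fromEdgeSet, sdiff_eq_left.mpr, Nat.card_range_of_injective hinj,
    Nat.card_sigma]
  · simp
  · rw [Set.disjoint_left]
    rintro _ ⟨p, rfl⟩
    simp

lemma magnitude_add_card_edges (H : HGraph V) :
    H.magnitude + Fintype.card H.E = ∑ e, (H.edge e).card := by
  rw [magnitude, Fintype.card_eq_sum_ones, ← Finset.sum_add_distrib]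
  exact Finset.sum_congr rfl fun e _ => Nat.sub_add_cancel (by linarith [H.two_le e])

lemma Walk.reachable_of_adj {m : ℕ} (w : H.Walk m) {G : SimpleGraph (V ⊕ H.E)}
    (hG : ∀ i, ∀ v ∈ H.edge (w.edg i), G.Adj (.inl v) (.inr (w.edg i))) :
    G.Reachable (.inl (w.vert 0)) (.inl (w.vert (Fin.last m))) :=
  reachable_of_forall_reachable_succ (fun i => Sum.inl (w.vert i)) fun i =>
    (hG i _ (w.mem_left i)).reachable.trans (hG i _ (w.mem_right i)).symm.reachable

lemma Connected.incidenceGraph_connected [Nonempty V] (hH : H.Connected) :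
    H.incidenceGraph.Connected := by
  have hV (u v : V) : H.incidenceGraph.Reachable (.inl u) (.inl v) := by
    obtain ⟨m, w, -, rfl, rfl⟩ := hH u v
    exact w.reachable_of_adj fun _ _ => incidenceGraph_adj_inl_inr.mpr
  have hE (e : H.E) : ∃ v : V, H.incidenceGraph.Reachable (.inl v) (.inr e) := by
    obtain ⟨v, hv⟩ := Finset.card_pos.mp (lt_of_lt_of_le two_pos (H.two_le e))
    exact ⟨v, (incidenceGraph_adj_inl_inr.mpr hv).reachable⟩
  refine connected_iff_exists_forall_reachable _ |>.mpr ⟨.inl (Classical.arbitrary V), ?_⟩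
  rintro (v | e)
  · exact hV _ v
  · obtain ⟨v, hv⟩ := hE e
    exact (hV _ v).trans hv

def Walk.tail {m : ℕ} (w : H.Walk (m + 1)) : H.Walk m where
  vert i := w.vert i.succ
  edg i := w.edg i.succ
  mem_left i := by simpa only [Fin.succ_castSucc] using w.mem_left i.succ
  mem_right i := w.mem_right i.succ

lemma Walk.IsCycle.not_isAcyclic_incidenceGraph {m : ℕ} {w : H.Walk m} (hw : w.IsCycle) :
    ¬ H.incidenceGraph.IsAcyclic := by
  obtain ⟨k, rfl⟩ : ∃ k, m = k + 2 := ⟨m - 2, by have := hw.1; omega⟩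
  obtain ⟨-, hinj, hclosed, hsimple⟩ := hw
  set e₀ := w.edg 0
  set v₁ := w.vert 1
  have hne : w.vert 0 ≠ v₁ := fun h => by
    rcases hsimple 0 1 h with h | h | h <;> simp [Fin.ext_iff] at h
  let G := H.incidenceGraph.deleteEdges {s(.inl v₁, .inr e₀)}
  have hGadj {v : V} {f : H.E} (hv : v ∈ H.edge f) (hvf : v ≠ v₁ ∨ f ≠ e₀) :
      G.Adj (.inl v) (.inr f) := by
    simp only [G, deleteEdges_adj, incidenceGraph_adj_inl_inr, Set.mem_singleton_iff, Sym2.eq_iff]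
    simp only [Sum.inl.injEq, Sum.inr.injEq, reduceCtorEq, and_false, or_false]
    tauto
  have hreach : G.Reachable (.inl v₁) (.inl (w.vert 0)) := by
    have := w.tail.reachable_of_adj (G := G) fun i v hv =>
      hGadj hv (.inr fun h => Fin.succ_ne_zero i (hinj h))
    simpa [Walk.tail, hclosed] using this
  rw [isAcyclic_iff_forall_adj_isBridge]
  intro h
  exact isBridge_iff.mp (h (incidenceGraph_adj_inl_inr.mpr (w.mem_right 0)))
    (hreach.trans (hGadj (w.mem_left 0) (.inl hne)).reachable)

lemma Connected.isTree_incidenceGraph [Nonempty V] (hH : H.Connected)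
    (hmag : H.magnitude + 1 = Fintype.card V) : H.incidenceGraph.IsTree := by
  rw [isTree_iff_connected_and_card, card_edgeSet_incidenceGraph, ← magnitude_add_card_edges,
    Nat.card_eq_fintype_card, Fintype.card_sum]
  exact ⟨hH.incidenceGraph_connected, by omega⟩

end HGraph

/-- A connected hypergraph on `n` vertices with edge magnitude exactly `n - 1`
is a hypertree (it has no cycles). -/
theorem connected_magnitude_eq_implies_hypertree
    {V : Type} [Fintype V] [DecidableEq V] (H : HGraph V)
    (n : ℕ) (hn : Fintype.card V = n) (hH : H.Connected)
    (hmag : H.magnitude = n - 1) :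
    H.IsHypertree := by
  refine ⟨hH, fun m w hw => ?_⟩
  have : Nonempty V := ⟨w.vert 0⟩
  have hcard : H.magnitude + 1 = Fintype.card V := by
    have := Fintype.card_pos (α := V)
    omega
  exact hw.not_isAcyclic_incidenceGraph (hH.isTree_incidenceGraph hcard).isAcyclic
end

section
/- Let R̄(t, u) be the formal power series satisfying R̄ = t·exp(u·(e^{R̄} - 1)). Then [t^n/n!] R̄ = ∑_{k=1}^{n-1} (n u)^k S(n-1, k), where S denotes Stirling numbers of the second kind. -/
/-- For a power series `f` with zero constant term, `expComp f = exp(f)`. -/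
noncomputable def expComp {K : Type*} [CommRing K] [Algebra ℚ K]
    (f : PowerSeries K) : PowerSeries K :=
  PowerSeries.mk fun n =>
    ∑ k ∈ Finset.range (n + 1),
      algebraMap ℚ K ((k.factorial : ℚ)⁻¹) * PowerSeries.coeff (R := K) n (f ^ k)

/-- The Stirling numbers of the second kind `S(n, k)`. -/
def stirling : ℕ → ℕ → ℕ
  | 0, 0 => 1
  | 0, _ + 1 => 0
  | _ + 1, 0 => 0
  | n + 1, k + 1 => (k + 1) * stirling n (k + 1) + stirling n k

/-!
Since `R̄ = t·ψ(R̄)` with `ψ(x) = exp(u(eˣ - 1))`, Lagrange inversion gives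
`n [tⁿ] R̄ = [x^(n-1)] ψⁿ`, and `ψⁿ = exp(nu(eˣ - 1))`. Expanding the outer exponential,
`[xᵐ] exp(w(eˣ - 1)) = ∑ₖ wᵏ/k! · [xᵐ] (eˣ - 1)ᵏ`, and `m!/k! · [xᵐ] (eˣ - 1)ᵏ = S(m, k)` because
differentiating `(eˣ - 1)^(k+1)` gives `(k+1)((eˣ - 1)^(k+1) + (eˣ - 1)ᵏ)`, which is the Stirling
recurrence on coefficients.

Lagrange inversion, in the form `(j + p) [t^(j+p)] R̄ʲ = j [xᵖ] ψ^(j+p)`, follows by strong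
induction on `p`: `[t^(j+p)] R̄ʲ = [tᵖ] ψ(R̄)ʲ = ∑ₐ [xᵃ] ψʲ · [tᵖ] R̄ᵃ`, the induction hypothesis
evaluates each `p [tᵖ] R̄ᵃ`, the resulting convolution is `[xᵖ]` of `x (ψʲ)' ψᵖ`, and
`(j + p) ψᵖ (ψʲ)' = j (ψ^(j+p))'`.
-/

open PowerSeries Finset Nat

namespace PowerSeries

section CommSemiring

variable {K : Type*} [CommSemiring K]

theorem coeff_pow_eq_zero_of_lt {g : K⟦X⟧} (hg : constantCoeff g = 0) {n d : ℕ} (h : n < d) :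
    coeff n (g ^ d) = 0 :=
  coeff_of_lt_order n <|
    (ENat.natCast_lt_natCast.2 h).trans_le (le_order_pow_of_constantCoeff_eq_zero d hg)

theorem coeff_X_mul_derivative (f : K⟦X⟧) (n : ℕ) :
    coeff n (X * d⁄dX K f) = n * coeff n f := by
  cases n with
  | zero => simp
  | succ n => rw [coeff_succ_X_mul, coeff_derivative, mul_comm]; push_cast; rfl

theorem add_nsmul_pow_mul_derivative_pow (f : K⟦X⟧) (j p : ℕ) :
    (j + p) • (f ^ p * d⁄dX K (f ^ j)) = j • d⁄dX K (f ^ (j + p)) := by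
  cases j with
  | zero => simp
  | succ i =>
    rw [derivative_pow, derivative_pow, show i + 1 + p - 1 = i + p by omega, nsmul_eq_mul,
      nsmul_eq_mul, add_tsub_cancel_right, pow_add]
    push_cast
    ring

end CommSemiring

section CommRing

variable {K : Type*} [CommRing K]

theorem coeff_subst_eq_sum_range {g : K⟦X⟧} (hg : constantCoeff g = 0) (f : K⟦X⟧) (n : ℕ) :
    coeff n (f.subst g) = ∑ d ∈ range (n + 1), coeff d f * coeff n (g ^ d) := by
  rw [coeff_subst' (.of_constantCoeff_zero' hg)]
  refine finsum_eq_sum_of_support_subset _ fun d hd ↦ mem_coe.2 (mem_range.2 ?_)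
  by_contra! hdn
  exact hd (by simp only [coeff_pow_eq_zero_of_lt hg hdn, smul_zero])

theorem lagrange_inversion [IsAddTorsionFree K] {f R : K⟦X⟧} (hR0 : constantCoeff R = 0)
    (hR : R = X * f.subst R) (j p : ℕ) :
    ((j + p : ℕ) : K) * coeff (j + p) (R ^ j) = j * coeff p (f ^ (j + p)) := by
  induction p using Nat.strong_induction_on generalizing j with
  | _ p ih =>
  have hRj : R ^ j = X ^ j * (f ^ j).subst R := by
    rw [subst_pow (.of_constantCoeff_zero' hR0), ← mul_pow, ← hR]
  rw [hRj, add_comm j p, coeff_X_pow_mul]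
  rcases p.eq_zero_or_pos with rfl | hp
  · simp [coeff_subst_eq_sum_range hR0]
  have hpow : ∀ a ∈ range (p + 1), (p : K) * coeff p (R ^ a) = a * coeff (p - a) (f ^ p) := by
    intro a ha
    rw [mem_range] at ha
    rcases a.eq_zero_or_pos with rfl | ha0
    · simp [coeff_one, hp.ne']
    · have := ih (p - a) (by omega) a
      rwa [show a + (p - a) = p by omega] at this
  refine (nsmul_right_inj hp.ne').1 ?_
  simp only [nsmul_eq_mul]
  calc (p : K) * (((p + j : ℕ) : K) * coeff p ((f ^ j).subst R))
      = ((p + j : ℕ) : K) * ∑ a ∈ range (p + 1), coeff a (f ^ j) * (p * coeff p (R ^ a)) := by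
        rw [coeff_subst_eq_sum_range hR0, mul_sum, mul_sum, mul_sum]
        exact sum_congr rfl fun a _ ↦ by ring
    _ = ((p + j : ℕ) : K) * coeff p (X * d⁄dX K (f ^ j) * f ^ p) := by
        rw [sum_congr rfl fun a ha ↦ by rw [hpow a ha], coeff_mul,
          Nat.sum_antidiagonal_eq_sum_range_succ_mk]
        exact congrArg _ (sum_congr rfl fun a _ ↦ by rw [coeff_X_mul_derivative]; ring)
    _ = coeff p (X * ((j + p) • (f ^ p * d⁄dX K (f ^ j)))) := by
        rw [nsmul_eq_mul, ← map_natCast (C (R := K)), ← coeff_C_mul]; push_cast; ring_nf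
    _ = p * (j * coeff p (f ^ (p + j))) := by
        rw [add_nsmul_pow_mul_derivative_pow, mul_smul_comm, map_nsmul, coeff_X_mul_derivative,
          add_comm j p, nsmul_eq_mul]
        ring

variable [Algebra ℚ K]

theorem expComp_eq_subst {f : K⟦X⟧} (hf : constantCoeff f = 0) :
    expComp f = (exp K).subst f := by
  ext n
  simp [expComp, coeff_subst_eq_sum_range hf, coeff_exp]

theorem expComp_C_mul_expComp_sub_one {R : K⟦X⟧} (hR0 : constantCoeff R = 0) (a : K) :
    expComp (C a * (expComp R - 1)) = subst R ((exp K).subst (C a * (exp K - 1))) := by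
  have hs : HasSubst R := .of_constantCoeff_zero' hR0
  have hE : constantCoeff (C a * (exp K - 1)) = 0 := by simp
  rw [subst_comp_subst_apply (.of_constantCoeff_zero' hE) hs, ← coe_substAlgHom hs, map_mul,
    map_sub, map_one, coe_substAlgHom, subst_C, ← expComp_eq_subst hR0,
    ← expComp_eq_subst (by simp [expComp])]
  rfl

theorem subst_exp_pow {g : K⟦X⟧} (hg : constantCoeff g = 0) (n : ℕ) :
    ((exp K).subst g) ^ n = (exp K).subst ((n : K) • g) := by
  have hs : HasSubst g := .of_constantCoeff_zero' hg
  rw [← subst_pow hs, exp_pow_eq_rescale_exp, rescale_eq_subst,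
    subst_comp_subst_apply (.smul_X' _) hs, subst_smul hs, subst_X hs]

theorem factorial_mul_coeff_exp_sub_one_pow (m k : ℕ) :
    (m ! : K) * coeff m ((exp K - 1) ^ k) = k ! * stirling m k := by
  induction m generalizing k with
  | zero => cases k <;> simp [stirling]
  | succ m ih =>
    cases k with
    | zero => simp [stirling, coeff_one]
    | succ k =>
      have hD : d⁄dX K ((exp K - 1) ^ (k + 1)) =
          (k + 1 : ℕ) • ((exp K - 1) ^ (k + 1) + (exp K - 1) ^ k) := by
        rw [derivative_pow, map_sub, derivative_one, derivative_exp, nsmul_eq_mul,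
          add_tsub_cancel_right]
        ring
      have hcoeff := congrArg (coeff m) hD
      rw [coeff_derivative, map_nsmul, map_add, nsmul_eq_mul] at hcoeff
      calc ((m + 1) ! : K) * coeff (m + 1) ((exp K - 1) ^ (k + 1))
          = (k + 1 : ℕ) * ((m ! : K) * coeff m ((exp K - 1) ^ (k + 1)) +
              (m ! : K) * coeff m ((exp K - 1) ^ k)) := by
            rw [factorial_succ]
            push_cast at hcoeff ⊢
            linear_combination (m ! : K) * hcoeff
        _ = (k + 1) ! * stirling (m + 1) (k + 1) := by
            rw [ih, ih, stirling, factorial_succ]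
            push_cast
            ring

theorem factorial_mul_coeff_subst_exp_sub_one (w : K) (m : ℕ) :
    (m ! : K) * coeff m ((exp K).subst (C w * (exp K - 1))) =
      ∑ k ∈ range (m + 1), (stirling m k : K) * w ^ k := by
  have hg : constantCoeff (C w * (exp K - 1)) = 0 := by simp
  rw [coeff_subst_eq_sum_range hg, mul_sum]
  refine sum_congr rfl fun k _ ↦ ?_
  rw [mul_pow, ← map_pow, coeff_C_mul, coeff_exp]
  calc (m ! : K) * (algebraMap ℚ K (1 / k !) * (w ^ k * coeff m ((exp K - 1) ^ k)))
      = algebraMap ℚ K (1 / k !) * ((m ! : K) * coeff m ((exp K - 1) ^ k)) * w ^ k := by ring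
    _ = (stirling m k : K) * w ^ k := by
        rw [factorial_mul_coeff_exp_sub_one_pow, ← mul_assoc, ← map_natCast (algebraMap ℚ K),
          ← map_mul, one_div_mul_cancel (by positivity), map_one, one_mul]

end CommRing

end PowerSeries

/-- If `R̄ = t·exp(u·(e^{R̄} - 1))` (coefficients in `ℚ[u]`, `u = Polynomial.X`), then
`[tⁿ/n!] R̄ = ∑_{k=1}^{n-1} (n·u)ᵏ S(n-1, k)`. -/
theorem coeff_edge_counting_hypertree_series (R : PowerSeries (Polynomial ℚ))
    (hR0 : PowerSeries.constantCoeff (R := Polynomial ℚ) R = 0)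
    (hR : R = PowerSeries.X *
      expComp (PowerSeries.C (R := Polynomial ℚ) Polynomial.X * (expComp R - 1)))
    (n : ℕ) (hn : 2 ≤ n) :
    (n.factorial : Polynomial ℚ) * PowerSeries.coeff (R := Polynomial ℚ) n R =
      ∑ k ∈ Finset.Icc 1 (n - 1),
        (stirling (n - 1) k : Polynomial ℚ) *
          ((n : Polynomial ℚ) * Polynomial.X) ^ k := by
  set E := exp (Polynomial ℚ) - 1
  have hE : constantCoeff (C Polynomial.X * E) = 0 := by simp [E]
  set ψ : (Polynomial ℚ)⟦X⟧ := (exp (Polynomial ℚ)).subst (C Polynomial.X * E)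
  have hR' : R = X * ψ.subst R := by rwa [expComp_C_mul_expComp_sub_one hR0] at hR
  have hψ_pow : ψ ^ n = (exp (Polynomial ℚ)).subst (C ((n : Polynomial ℚ) * Polynomial.X) * E) := by
    rw [subst_exp_pow hE, smul_eq_C_mul, ← mul_assoc, ← map_mul]
  obtain ⟨m, rfl⟩ : ∃ m, n = m + 1 + 1 := ⟨n - 2, by omega⟩
  have hlagrange := lagrange_inversion hR0 hR' 1 (m + 1)
  rw [add_comm 1 (m + 1), pow_one, Nat.cast_one, one_mul] at hlagrange
  calc ((m + 1 + 1) ! : Polynomial ℚ) * coeff (m + 1 + 1) R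
      = ((m + 1) ! : Polynomial ℚ) * (((m + 1 + 1 : ℕ) : Polynomial ℚ) * coeff (m + 1 + 1) R) := by
        rw [factorial_succ]; push_cast; ring
    _ = ((m + 1) ! : Polynomial ℚ) * coeff (m + 1) (ψ ^ (m + 1 + 1)) := by rw [hlagrange]
    _ = ∑ k ∈ range (m + 1 + 1), (stirling (m + 1) k : Polynomial ℚ) *
          (((m + 1 + 1 : ℕ) : Polynomial ℚ) * Polynomial.X) ^ k := by
        rw [hψ_pow, factorial_mul_coeff_subst_exp_sub_one]
    _ = ∑ k ∈ Icc 1 (m + 1), (stirling (m + 1) k : Polynomial ℚ) *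
          (((m + 1 + 1 : ℕ) : Polynomial ℚ) * Polynomial.X) ^ k := by
        rw [range_eq_Ico, sum_eq_sum_Ico_succ_bot (by omega), stirling, Nat.cast_zero, zero_mul,
          zero_add, Ico_add_one_right_eq_Icc]
end
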